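/- arXiv:1707.09915 — 2 statements merged into one kernel-verified Lean document; each statement's English description precedes it below -/
import Mathlib

section
/- For every integer N ≥ 1 and every complex number s, the integral over ℝ^N of Δ_N(x)² · ∏_{j=1}^N (1+x_j²)^{-Re(s)-N} · exp(2·Im(s)·arctan(x_j)) with respect to Lebesgue measure is finite if and only if Re(s) > -1/2. (This is the normalizability condition for the Hua–Pickrell eigenvalue measure μ_HP^{s,N}.) -/
open MeasureTheory Finset

/-! Since `(a - b)² ≤ 4 (1 + a²) (1 + b²)`, the integrand is dominated by `4^{N(N-1)}` times a
product of the one-variable functions `(1 + t²)^(-Re s - 1) exp (2 Im s arctan t)`, which are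
integrable exactly when `Re s > -1/2`. Conversely, on the region where `x_1, …, x_{N-1}` lie in
unit intervals at mutual distance `≥ 1` and `x_N` is beyond all of them by at least `x_N / 2`, the
squared Vandermonde is at least `((1 + x_N²) / 8)^(N-1)`, so the integral dominates the divergent
tail `∫^∞ (1 + t²)^(-Re s - 1) exp (2 Im s arctan t) dt` when `Re s ≤ -1/2`. -/

theorem lintegral_fin_prod_eq_prod {α : Type*} [MeasurableSpace α] {n : ℕ}
    (μ : Fin n → Measure α) [∀ i, SigmaFinite (μ i)] (f : Fin n → α → ENNReal)
    (hf : ∀ i, Measurable (f i)) :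
    ∫⁻ x, ∏ i, f i (x i) ∂Measure.pi μ = ∏ i, ∫⁻ t, f i t ∂μ i := by
  induction n with
  | zero => simp
  | succ n ih =>
    rw [← ((measurePreserving_piFinSuccAbove μ 0).symm).lintegral_comp_emb
      (MeasurableEquiv.measurableEmbedding _)]
    simp_rw [MeasurableEquiv.piFinSuccAbove_symm_apply, Fin.insertNthEquiv, Fin.prod_univ_succ,
      Equiv.coe_fn_mk, Fin.insertNth_zero, Fin.cons_zero, Fin.cons_succ, Fin.zero_succAbove,
      cast_eq]
    have hrest : Measurable fun y : Fin n → α => ∏ i, f i.succ (y i) :=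
      Finset.measurable_prod _ fun i _ => (hf i.succ).comp (measurable_pi_apply i)
    rw [lintegral_prod_mul (hf 0).aemeasurable hrest.aemeasurable, ih _ _ fun i => hf i.succ]

namespace HuaPickrell

open Real Set

noncomputable def weight (q c t : ℝ) : ℝ := (1 + t ^ 2) ^ q * exp (c * arctan t)

variable {q : ℝ}

theorem weight_pos (q c t : ℝ) : 0 < weight q c t := by unfold weight; positivity

@[fun_prop]
theorem continuous_weight (q c : ℝ) : Continuous (weight q c) := by
  unfold weight
  exact (continuous_const.add (continuous_pow 2)).rpow_const
      (fun t => Or.inl (by positivity : (0 : ℝ) < 1 + t ^ 2).ne')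
    |>.mul (continuous_exp.comp (continuous_const.mul continuous_arctan))

theorem one_add_sq_pow_mul_weight {c : ℝ} (k : ℕ) (t : ℝ) :
    (1 + t ^ 2) ^ k * weight q c t = weight (q + k) c t := by
  rw [weight, weight, rpow_add (by positivity), rpow_natCast]
  ring

theorem abs_mul_arctan_le (c t : ℝ) : |c * arctan t| ≤ |c| * (π / 2) := by
  rw [abs_mul]
  gcongr
  exact abs_le.2 ⟨(neg_pi_div_two_lt_arctan t).le, (arctan_lt_pi_div_two t).le⟩

theorem integrable_weight (hq : q < -1 / 2) (c : ℝ) : Integrable (weight q c) := by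
  have hdom : Integrable fun t : ℝ => exp (|c| * (π / 2)) * (1 + ‖t‖ ^ 2) ^ (-(-2 * q) / 2) :=
    (integrable_rpow_neg_one_add_norm_sq (by simp; linarith)).const_mul _
  refine hdom.mono' (continuous_weight q c).aestronglyMeasurable (ae_of_all _ fun t => ?_)
  rw [norm_of_nonneg (weight_pos q c t).le, weight, norm_eq_abs, sq_abs,
    show -(-2 * q) / 2 = q by ring, mul_comm (exp _)]
  exact mul_le_mul_of_nonneg_left (exp_le_exp.2 ((le_abs_self _).trans (abs_mul_arctan_le c t)))
    (by positivity)

theorem lintegral_Ici_weight_eq_top (hq : -1 / 2 ≤ q) (c a : ℝ) :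
    ∫⁻ t in Ici a, ENNReal.ofReal (weight q c t) = ⊤ := by
  set K := 2 * exp (|c| * (π / 2)) with hK
  have hinv_le : ∀ t ∈ Ioi (max a 1), ‖t⁻¹‖ ≤ K * weight q c t := by
    intro t ht
    have ht1 : 1 ≤ t := (le_max_right a 1).trans ht.le
    have hpow : (2 * t)⁻¹ ≤ (1 + t ^ 2) ^ q :=
      calc (2 * t)⁻¹ = ((2 * t) ^ 2) ^ (-1 / 2 : ℝ) := by
            rw [← rpow_natCast, ← rpow_mul (by positivity)]; norm_num [rpow_neg_one]
        _ ≤ (1 + t ^ 2) ^ (-1 / 2 : ℝ) := rpow_le_rpow_of_nonpos (by positivity) (by nlinarith)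
            (by norm_num)
        _ ≤ (1 + t ^ 2) ^ q := rpow_le_rpow_of_exponent_le (by nlinarith) hq
    have hexp : exp (-(|c| * (π / 2))) ≤ exp (c * arctan t) :=
      exp_le_exp.2 (neg_le_of_abs_le (abs_mul_arctan_le c t))
    rw [norm_inv, norm_of_nonneg (by linarith), weight]
    calc t⁻¹ = K * ((2 * t)⁻¹ * exp (-(|c| * (π / 2)))) := by
          rw [hK, exp_neg]; field_simp
      _ ≤ K * ((1 + t ^ 2) ^ q * exp (c * arctan t)) := by gcongr
  have hnot : ¬ IntegrableOn (weight q c) (Ici a) := fun h =>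
    not_integrableOn_Ioi_inv <|
      ((h.mono_set (Ioi_subset_Ici (le_max_left a 1))).const_mul K).mono'
        measurable_inv.aestronglyMeasurable
        ((ae_restrict_iff' measurableSet_Ioi).2 (ae_of_all _ hinv_le))
  by_contra hfin
  exact hnot ((lintegral_ofReal_ne_top_iff_integrable (continuous_weight q c).aestronglyMeasurable
    (ae_of_all _ fun t => (weight_pos q c t).le)).1 hfin)

theorem det_vandermonde_sq {R : Type*} [CommRing R] {n : ℕ} (x : Fin n → R) :
    (Matrix.vandermonde x).det ^ 2 = ∏ i, ∏ j ∈ Ioi i, (x j - x i) ^ 2 := by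
  simp_rw [Matrix.det_vandermonde, ← Finset.prod_pow]

theorem prod_prod_Ioi_mul {M : Type*} [CommMonoid M] {n : ℕ} (f : Fin n → M) :
    ∏ i, ∏ j ∈ Ioi i, f i * f j = ∏ k, f k ^ (n - 1) := by
  have hcomm : ∏ i, ∏ j ∈ Ioi i, f j = ∏ j, ∏ _i ∈ Iio j, f j :=
    Finset.prod_comm' fun i j => by simp
  simp_rw [Finset.prod_mul_distrib, hcomm, Finset.prod_const, ← Finset.prod_mul_distrib, ← pow_add,
    Fin.card_Ioi, Fin.card_Iio]
  refine Finset.prod_congr rfl fun k _ => congrArg _ ?_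
  omega

theorem det_vandermonde_sq_le {n : ℕ} (x : Fin n → ℝ) :
    (Matrix.vandermonde x).det ^ 2 ≤ ∏ k, (4 * (1 + x k ^ 2)) ^ (n - 1) := by
  rw [det_vandermonde_sq, ← prod_prod_Ioi_mul]
  gcongr with i _ j _
  nlinarith [sq_nonneg (x i + x j), sq_nonneg (x i * x j), sq_nonneg (x i), sq_nonneg (x j)]

theorem prod_prod_Ioi_ite_last {M : Type*} [CommMonoid M] (n : ℕ) (a : M) :
    ∏ i : Fin (n + 1), ∏ j ∈ Ioi i, (if j = Fin.last n then a else 1) = a ^ n := by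
  simp_rw [Finset.prod_ite_eq', Finset.mem_Ioi, Fin.prod_univ_castSucc, Fin.castSucc_lt_last,
    if_true, lt_irrefl, if_false, Finset.prod_const, Finset.card_univ, Fintype.card_fin, mul_one]

/-- On this box `(x_j - x_i)² ≥ 1` for `i < j < last`, and `x_last ≥ 2 x_i`, so that
`(x_last - x_i)² ≥ x_last² / 4 ≥ (1 + x_last²) / 8`. -/
def box (n : ℕ) : Fin (n + 1) → Set ℝ :=
  Fin.lastCases (Ici (4 * (n + 1))) fun i => Icc (2 * i) (2 * i + 1)

theorem le_sub_sq_of_mem_box {n : ℕ} {x : Fin (n + 1) → ℝ} (hx : ∀ i, x i ∈ box n i)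
    {i j : Fin (n + 1)} (hij : i < j) :
    (if j = Fin.last n then (1 + x (Fin.last n) ^ 2) / 8 else 1) ≤ (x j - x i) ^ 2 := by
  obtain ⟨i, rfl⟩ := Fin.exists_castSucc_eq.2 (hij.trans_le (Fin.le_last j)).ne
  have hi := hx i.castSucc
  simp only [box, Fin.lastCases_castSucc, Set.mem_Icc] at hi
  induction j using Fin.lastCases with
  | last =>
    have hL := hx (Fin.last n)
    simp only [box, Fin.lastCases_last, Set.mem_Ici] at hL
    have hin : (i : ℝ) + 1 ≤ n := by exact_mod_cast i.isLt
    have hhalf : x (Fin.last n) / 2 ≤ x (Fin.last n) - x i.castSucc := by linarith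
    rw [if_pos rfl]
    nlinarith [mul_self_le_mul_self (by linarith) hhalf]
  | cast j =>
    have hj := hx j.castSucc
    simp only [box, Fin.lastCases_castSucc, Set.mem_Icc] at hj
    have hij' : (i : ℝ) + 1 ≤ j := by exact_mod_cast Fin.castSucc_lt_castSucc_iff.1 hij
    rw [if_neg (Fin.castSucc_ne_last j)]
    nlinarith

theorem le_det_vandermonde_sq {n : ℕ} {x : Fin (n + 1) → ℝ} (hx : ∀ i, x i ∈ box n i) :
    ((1 + x (Fin.last n) ^ 2) / 8) ^ n ≤ (Matrix.vandermonde x).det ^ 2 := by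
  rw [det_vandermonde_sq, ← prod_prod_Ioi_ite_last]
  refine Finset.prod_le_prod (fun i _ => Finset.prod_nonneg fun j _ => ?_)
    fun i _ => Finset.prod_le_prod (fun j _ => ?_) fun j hj =>
      le_sub_sq_of_mem_box hx (mem_Ioi.1 hj)
  all_goals split_ifs <;> positivity

theorem lintegral_det_vandermonde_sq_mul_prod_weight_lt_top {n : ℕ}
    (hq : q + (n - 1 : ℕ) < -1 / 2) (c : ℝ) :
    ∫⁻ x : Fin n → ℝ, ENNReal.ofReal ((Matrix.vandermonde x).det ^ 2 * ∏ j, weight q c (x j))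
      < ⊤ := by
  set v : ℝ → ℝ := fun t => 4 ^ (n - 1) * weight (q + (n - 1 : ℕ)) c t
  have hbound (x : Fin n → ℝ) :
      (Matrix.vandermonde x).det ^ 2 * ∏ j, weight q c (x j) ≤ ∏ j, v (x j) :=
    calc _ ≤ (∏ k, (4 * (1 + x k ^ 2)) ^ (n - 1)) * ∏ j, weight q c (x j) :=
          mul_le_mul_of_nonneg_right (det_vandermonde_sq_le x)
            (prod_nonneg fun j _ => (weight_pos _ _ _).le)
      _ = ∏ j, v (x j) := by
          simp_rw [v, ← Finset.prod_mul_distrib, mul_pow, mul_assoc, one_add_sq_pow_mul_weight]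
  calc _ ≤ ∫⁻ x : Fin n → ℝ, ∏ j, ENNReal.ofReal (v (x j)) :=
        lintegral_mono fun x => (ENNReal.ofReal_le_ofReal (hbound x)).trans_eq
          (ENNReal.ofReal_prod_of_nonneg fun j _ =>
            mul_nonneg (by positivity) (weight_pos _ _ _).le)
    _ = ∏ j : Fin n, ∫⁻ t, ENNReal.ofReal (v t) := by
        rw [volume_pi]
        exact lintegral_fin_prod_eq_prod _ _ fun _ =>
          (measurable_const.mul (continuous_weight _ c).measurable).ennreal_ofReal
    _ < ⊤ := ENNReal.prod_lt_top fun _ _ => ((integrable_weight hq c).const_mul _).lintegral_lt_top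

theorem measurableSet_box (n : ℕ) (i : Fin (n + 1)) : MeasurableSet (box n i) := by
  induction i using Fin.lastCases <;>
    simp only [box, Fin.lastCases_last, Fin.lastCases_castSucc, measurableSet_Ici,
      measurableSet_Icc]

theorem lintegral_det_vandermonde_sq_mul_prod_weight_eq_top {n : ℕ} (hq : -1 / 2 ≤ q + n)
    (c : ℝ) :
    ∫⁻ x : Fin (n + 1) → ℝ, ENNReal.ofReal ((Matrix.vandermonde x).det ^ 2 * ∏ j, weight q c (x j))
      = ⊤ := by
  set g : Fin (n + 1) → ℝ → ℝ :=
    Fin.lastCases (fun t => ((1 + t ^ 2) / 8) ^ n * weight q c t) fun _ => weight q c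
  have hg_meas (i : Fin (n + 1)) : Measurable fun t => ENNReal.ofReal (g i t) := by
    induction i using Fin.lastCases <;>
      simp only [g, Fin.lastCases_last, Fin.lastCases_castSucc] <;> fun_prop
  have hbound : ∀ x ∈ Set.univ.pi (box n), ∏ i, ENNReal.ofReal (g i (x i)) ≤
      ENNReal.ofReal ((Matrix.vandermonde x).det ^ 2 * ∏ j, weight q c (x j)) := by
    intro x hx
    rw [← ENNReal.ofReal_prod_of_nonneg fun i _ => ?_]
    · refine ENNReal.ofReal_le_ofReal ?_
      calc ∏ i, g i (x i) = ((1 + x (Fin.last n) ^ 2) / 8) ^ n * ∏ j, weight q c (x j) := by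
            simp only [g, Fin.prod_univ_castSucc, Fin.lastCases_last, Fin.lastCases_castSucc]
            ring
        _ ≤ _ := mul_le_mul_of_nonneg_right (le_det_vandermonde_sq fun i => hx i (mem_univ i))
            (prod_nonneg fun j _ => (weight_pos _ _ _).le)
    · induction i using Fin.lastCases <;> simp only [g, Fin.lastCases_last, Fin.lastCases_castSucc]
      exacts [mul_nonneg (by positivity) (weight_pos _ _ _).le, (weight_pos _ _ _).le]
  have hbox_ne_zero (i : Fin n) : ∫⁻ t in Icc (2 * (i : ℝ)) (2 * i + 1),
      ENNReal.ofReal (weight q c t) ≠ 0 :=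
    ((setLIntegral_pos_iff (by fun_prop)).2 (by simp [Function.support, weight_pos])).ne'
  have htail : ∫⁻ t in Ici (4 * ((n : ℝ) + 1)),
      ENNReal.ofReal (((1 + t ^ 2) / 8) ^ n * weight q c t) = ⊤ := by
    have hrw (t : ℝ) : ((1 + t ^ 2) / 8) ^ n * weight q c t = (8 ^ n)⁻¹ * weight (q + n) c t := by
      rw [← one_add_sq_pow_mul_weight, div_pow]; ring
    simp_rw [hrw, ENNReal.ofReal_mul (by positivity : (0 : ℝ) ≤ (8 ^ n)⁻¹)]
    rw [lintegral_const_mul _ (by fun_prop), lintegral_Ici_weight_eq_top hq, ENNReal.mul_top]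
    exact (ENNReal.ofReal_pos.2 (by positivity)).ne'
  refine eq_top_iff.2 ?_
  calc ⊤ = ∏ i, ∫⁻ t in box n i, ENNReal.ofReal (g i t) := by
        simp only [g, box, Fin.prod_univ_castSucc, Fin.lastCases_last, Fin.lastCases_castSucc]
        rw [htail, ENNReal.mul_top (prod_ne_zero_iff.2 fun i _ => hbox_ne_zero i)]
    _ = ∫⁻ x in Set.univ.pi (box n), ∏ i, ENNReal.ofReal (g i (x i)) := by
        rw [volume_pi, Measure.restrict_pi_pi, lintegral_fin_prod_eq_prod _ _ hg_meas]
    _ ≤ _ := setLIntegral_mono' (MeasurableSet.univ_pi (measurableSet_box n)) hbound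
    _ ≤ _ := setLIntegral_le_lintegral _ _

theorem lintegral_det_vandermonde_sq_mul_prod_weight_lt_top_iff (n : ℕ) (q c : ℝ) :
    ∫⁻ x : Fin (n + 1) → ℝ, ENNReal.ofReal ((Matrix.vandermonde x).det ^ 2 * ∏ j, weight q c (x j))
      < ⊤ ↔ q + n < -1 / 2 :=
  ⟨fun h => not_le.1 fun hq => h.ne (lintegral_det_vandermonde_sq_mul_prod_weight_eq_top hq c),
    fun hq => lintegral_det_vandermonde_sq_mul_prod_weight_lt_top (by simpa using hq) c⟩

end HuaPickrell

/-- Normalizability of the Hua–Pickrell eigenvalue measure: for `N ≥ 1` and `s ∈ ℂ`,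
the integral over `ℝ^N` of `Δ_N(x)^2 ∏_j (1+x_j^2)^(-Re s - N) exp(2 Im(s) arctan x_j)`
is finite iff `Re s > -1/2`. -/
theorem huaPickrell_eigenvalue_normalizable (N : ℕ) (hN : 1 ≤ N) (s : ℂ) :
    (∫⁻ x : Fin N → ℝ,
        ENNReal.ofReal
          ((∏ i : Fin N, ∏ j ∈ Finset.Ioi i, (x j - x i)) ^ 2 *
            ∏ j : Fin N,
              (1 + x j ^ 2) ^ (-s.re - (N : ℝ)) * Real.exp (2 * s.im * Real.arctan (x j)))) < ⊤
      ↔ -1 / 2 < s.re := by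
  obtain ⟨n, rfl⟩ := Nat.exists_eq_add_of_le' hN
  have key := HuaPickrell.lintegral_det_vandermonde_sq_mul_prod_weight_lt_top_iff n
    (-s.re - (n + 1 : ℕ)) (2 * s.im)
  simp only [HuaPickrell.weight, Matrix.det_vandermonde] at key
  rw [key]
  push_cast
  constructor <;> intro h <;> linarith
end

section
/- Let x ∈ ℝ, s ∈ ℂ and N ∈ ℕ. With all complex powers taken as principal branch powers, (1+ix)^{−s−N} · (1−ix)^{−conj(s)−N} = (1+x²)^{−Re(s)−N} · exp(2·Im(s)·arctan(x)); in particular the left-hand side is a positive real number. (This identifies the two forms of the Hua–Pickrell density appearing in the paper.) -/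
/-!
`1 - ix` is the conjugate of `z = 1 + ix`, and since `z` lies off the branch cut,
`conj (z ^ w) = conj z ^ conj w`. The left-hand side is therefore `|z ^ w|²` with `w = -s - N`,
i.e. `|z| ^ (2 Re w) * exp (-2 Im w · arg z)`, and `|z|² = 1 + x²`, `arg z = arctan x`.
-/

open Complex Real ComplexConjugate

namespace Complex

theorem cpow_mul_conj_cpow_conj {z : ℂ} (hz : z ≠ 0) (hπ : z.arg ≠ π) (w : ℂ) :
    z ^ w * conj z ^ conj w = ((normSq z ^ w.re * Real.exp (-2 * w.im * z.arg) : ℝ) : ℂ) := by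
  rw [conj_cpow _ _ hπ, conj_conj, mul_conj, normSq_eq_norm_sq, norm_cpow_of_ne_zero hz,
    div_pow, ← Real.rpow_natCast, ← Real.rpow_mul (norm_nonneg z), ← Real.exp_nat_mul,
    normSq_eq_norm_sq, ← Real.rpow_natCast, ← Real.rpow_mul (norm_nonneg z), div_eq_mul_inv,
    ← Real.exp_neg]
  push_cast
  ring_nf

theorem normSq_one_add_I_mul (x : ℝ) : normSq (1 + I * x) = 1 + x ^ 2 := by
  simp [normSq_apply, sq]

theorem arg_one_add_I_mul (x : ℝ) : arg (1 + I * x) = Real.arctan x := by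
  have hre : (1 + I * x).re = 1 := by simp
  have hlt : arg (1 + I * x) < π / 2 := arg_lt_pi_div_two_iff.2 (Or.inl (by rw [hre]; norm_num))
  have hgt : -(π / 2) < arg (1 + I * x) :=
    neg_pi_div_two_lt_arg_iff.2 (Or.inl (by rw [hre]; norm_num))
  rw [← Real.arctan_tan hgt hlt, tan_arg, hre]
  simp

end Complex

/-- The two forms of the Hua–Pickrell density agree: for real `x`, complex `s` and `N : ℕ`,
with principal branch complex powers,
`(1+ix)^(-s-N) * (1-ix)^(-conj s - N) = (1+x^2)^(-Re s - N) * exp (2 Im(s) arctan x)`,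
a positive real number. -/
theorem huaPickrell_density_eq (x : ℝ) (s : ℂ) (N : ℕ) :
    (1 + Complex.I * x) ^ (-s - N) * (1 - Complex.I * x) ^ (-(starRingEnd ℂ) s - N) =
      (((1 + x ^ 2) ^ (-s.re - (N : ℝ)) * Real.exp (2 * s.im * Real.arctan x) : ℝ) : ℂ) := by
  have hz : (1 + I * x) ≠ 0 := fun h => by simpa using congrArg re h
  have hπ : arg (1 + I * x) ≠ π := by
    rw [arg_one_add_I_mul]
    exact (Real.arctan_lt_pi_div_two x).trans (half_lt_self Real.pi_pos) |>.ne
  have hconj : 1 - I * x = conj (1 + I * x) := by simp [Complex.ext_iff]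
  have hexp : -(starRingEnd ℂ) s - N = conj (-s - N) := by simp
  rw [hconj, hexp, cpow_mul_conj_cpow_conj hz hπ, normSq_one_add_I_mul, arg_one_add_I_mul]
  congr 3
  simp
end
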